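/- Let (J, m) be a MaxT instance with all time windows contained in [1,T] (T ≥ 2) and |χ_j| ≥ 3 for every j ∈ J, and let L(T), 𝔏 be the binary laminar family and mapping. Then for every feasibly schedulable subset O ⊆ J and every χ ∈ L(T), Σ_{j∈O : 𝔏(χ_j) ⊆ χ} a_j ≤ 4·m·|χ|. -/
import Mathlib


open Finset

/-- A subset `S` of jobs is feasibly schedulable on `m` identical hosts:
for each job `j ∈ S` one can pick a set of exactly `p j` time slots inside its
time window `[r j, d j]` and a host for each chosen slot, so that at every host
and every time slot, the total size of jobs running there is at most `1`. -/
def Schedulable {ι : Type*} (m : ℕ) (r d : ι → ℤ) (p : ι → ℕ) (s : ι → ℝ)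
    (S : Finset ι) : Prop :=
  ∃ (Tj : ι → Finset ℤ) (h : ι → ℤ → Fin m),
    (∀ j ∈ S, Tj j ⊆ Finset.Icc (r j) (d j) ∧ (Tj j).card = p j) ∧
    ∀ (i : Fin m) (t : ℤ),
      ∑ j ∈ S.filter (fun j => t ∈ Tj j ∧ h j t = i), s j ≤ 1

/-- The binary laminar family `L(T)` of subintervals of `[1,T]`. -/
inductive BinLam (T : ℤ) : ℤ → ℤ → Prop
  | root : BinLam T 1 T
  | left {l r : ℤ} : BinLam T l r → 1 < r - l → BinLam T l ((l + r) / 2)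
  | right {l r : ℤ} : BinLam T l r → 1 < r - l → BinLam T ((l + r) / 2 + 1) r

/-- `[l,r]` is the interval `𝔏([a,b])`: the largest interval of the binary laminar
family `L(T)` contained in `[a,b]`, ties broken by taking the rightmost one. -/
def IsLMap (T a b l r : ℤ) : Prop :=
  BinLam T l r ∧ a ≤ l ∧ r ≤ b ∧
  ∀ l' r' : ℤ, BinLam T l' r' → a ≤ l' → r' ≤ b →
    (r' - l' < r - l ∨ (r' - l' = r - l ∧ r' ≤ r))

lemma binlam_bounds {T a b : ℤ} (hT : 1 ≤ T) (h : BinLam T a b) :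
    1 ≤ a ∧ a ≤ b ∧ b ≤ T := by
  induction h with
  | root => omega
  | left hP hgt ih => omega
  | right hP hgt ih => omega

/-- Right-neighbor lemma: every node `[L,R]` with `R < T` has a node `[R+1,R₂]`
immediately to its right whose length differs from `R-L+1` by at most one. -/
lemma binlam_rn {T L R : ℤ} (h : BinLam T L R) :
    R < T → ∃ R₂, BinLam T (R + 1) R₂ ∧ R - L ≤ R₂ - R ∧ R₂ - R ≤ R - L + 2 := by
  induction h with
  | root => intro hc; omega
  | @left L R hP hgt ih =>
    intro _
    exact ⟨R, BinLam.right hP hgt, by omega, by omega⟩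
  | @right L R hP hgt ih =>
    intro hRT
    obtain ⟨R₂, hn, h1, h2⟩ := ih hRT
    by_cases hc : 1 < R₂ - (R + 1)
    · exact ⟨(R + 1 + R₂) / 2, BinLam.left hn hc, by omega, by omega⟩
    · exact ⟨R₂, hn, by omega, by omega⟩

/-- If a node `[l,rr]` has room `b ≥ rr + (rr-l+1) + 1` to its right (within `[1,T]`),
then there is a node `[u,v] ⊆ [l,b]` with `v > rr` and length `≥ rr - l + 1`. -/
lemma binlam_claimR {T l rr : ℤ} (hT : 1 ≤ T) (h : BinLam T l rr) :
    ∀ b, b ≤ T → rr + (rr - l + 1) + 1 ≤ b →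
      ∃ u v, BinLam T u v ∧ l ≤ u ∧ rr + 1 ≤ v ∧ v ≤ b ∧ rr - l ≤ v - u := by
  induction h with
  | root => intro b h1 h2; exfalso; omega
  | @left L R hP hgt ih =>
    intro b hbT hb
    exact ⟨L, R, hP, le_refl _, by omega, by omega, by omega⟩
  | @right L R hP hgt ih =>
    intro b hbT hb
    have hRT : R < T := by omega
    obtain ⟨R₂, hn, h1, h2⟩ := binlam_rn hP hRT
    by_cases hc : R₂ - R ≤ R - (L + R) / 2 + 1
    · exact ⟨R + 1, R₂, hn, by omega, by omega, by omega, by omega⟩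
    · refine ⟨R + 1, (R + 1 + R₂) / 2, BinLam.left hn (by omega), by omega, by omega,
        by omega, by omega⟩

/-- Descend through right children to find a node ending at `v0`, of length `≥ s+1`,
starting at or after `a`. -/
lemma binlam_descend {T : ℤ} :
    ∀ n : ℕ, ∀ u0 v0 a s : ℤ, BinLam T u0 v0 → v0 - u0 ≤ (n : ℤ) → 1 ≤ s →
      s ≤ v0 - u0 → a + 2 * s ≤ v0 →
      ∃ u, BinLam T u v0 ∧ a ≤ u ∧ s ≤ v0 - u := by
  intro n
  induction n with
  | zero =>
    intro u0 v0 a s h hn hs1 hs2 ha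
    by_cases hau : a ≤ u0
    · exact ⟨u0, h, hau, hs2⟩
    · exfalso; omega
  | succ n ih =>
    intro u0 v0 a s h hn hs1 hs2 ha
    by_cases hau : a ≤ u0
    · exact ⟨u0, h, hau, hs2⟩
    · have h3 : 1 < v0 - u0 := by omega
      exact ih ((u0 + v0) / 2 + 1) v0 a s (BinLam.right h h3) (by omega) hs1
        (by omega) ha

/-- For a node `[L,R]`, any demanded length `s+1 ≤ R-L+1` can be found as a node
ending at `L-1`, within distance `2s+1` to the left of `L`. -/
lemma binlam_auxL {T L R : ℤ} (h : BinLam T L R) :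
    ∀ a s : ℤ, 1 ≤ a → 1 ≤ s → a + 2 * s + 1 ≤ L → s ≤ R - L →
      ∃ u v, BinLam T u v ∧ a ≤ u ∧ v ≤ L - 1 ∧ s ≤ v - u := by
  induction h with
  | root => intro a s ha hs h1 h2; exfalso; omega
  | @left L R hP hgt ih =>
    intro a s ha hs h1 h2
    exact ih a s ha hs h1 (by omega)
  | @right L R hP hgt ih =>
    intro a s ha hs h1 h2
    have hsib : BinLam T L ((L + R) / 2) := BinLam.left hP hgt
    obtain ⟨u, hu, hau, hsu⟩ := binlam_descend (T := T) ((L + R) / 2 - L).toNat L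
      ((L + R) / 2) a s hsib (by omega) hs (by omega) (by omega)
    exact ⟨u, (L + R) / 2, hu, hau, by omega, hsu⟩

/-- If a node `[l,rr]` has room `a ≤ l - 2(rr-l+1) - 1` to its left (with `a ≥ 1`),
then there is a node `[u,v] ⊆ [a,rr]` of length strictly greater than `rr - l + 1`. -/
lemma binlam_claimL {T l rr : ℤ} (hT : 1 ≤ T) (h : BinLam T l rr) :
    ∀ a : ℤ, 1 ≤ a → a + 2 * (rr - l + 1) + 1 ≤ l →
      ∃ u v, BinLam T u v ∧ a ≤ u ∧ v ≤ rr ∧ rr - l + 1 ≤ v - u := by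
  induction h with
  | root => intro a h1 h2; exfalso; omega
  | @left L R hP hgt ih =>
    intro a h1 h2
    obtain ⟨u, v, hn, h3, h4, h5⟩ := binlam_auxL hP a ((L + R) / 2 - L + 1) h1
      (by omega) (by omega) (by omega)
    exact ⟨u, v, hn, h3, by omega, by omega⟩
  | @right L R hP hgt ih =>
    intro a h1 h2
    exact ⟨L, R, hP, by omega, le_refl _, by omega⟩

theorem stmt_6 {ι : Type*} [Fintype ι]
    (m : ℕ) (hm : 1 ≤ m) (T : ℤ) (hT : 2 ≤ T)
    (r d : ι → ℤ) (p : ι → ℕ) (s : ι → ℝ)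
    (hr1 : ∀ j, 1 ≤ r j) (hdT : ∀ j, d j ≤ T)
    (hsize : ∀ j, 3 ≤ d j - r j + 1)
    (hp1 : ∀ j, 1 ≤ p j)
    (hpw : ∀ j, (p j : ℤ) ≤ d j - r j + 1)
    (hs0 : ∀ j, 0 < s j) (hs1 : ∀ j, s j ≤ 1)
    (Ll Lr : ι → ℤ) (hL : ∀ j, IsLMap T (r j) (d j) (Ll j) (Lr j))
    (O : Finset ι) (hO : Schedulable m r d p s O)
    (l rr : ℤ) (hnode : BinLam T l rr) :
    ∑ j ∈ O.filter (fun j => Finset.Icc (Ll j) (Lr j) ⊆ Finset.Icc l rr),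
        (p j : ℝ) * s j
      ≤ 4 * m * ((rr - l + 1 : ℤ) : ℝ) := by
  classical
  obtain ⟨Tj, hst, hTw, hcap⟩ := hO
  have hT1 : (1 : ℤ) ≤ T := by omega
  obtain ⟨hl1, hlr, hrT⟩ := binlam_bounds hT1 hnode
  set w : ℤ := rr - l + 1 with hw
  set F : Finset ι :=
    O.filter (fun j => Finset.Icc (Ll j) (Lr j) ⊆ Finset.Icc l rr) with hF
  -- Step 1: every window of a job in `F` lies in `[l - 2w, rr + w]`.
  have hwb : ∀ j ∈ F, l - 2 * w ≤ r j ∧ d j ≤ rr + w := by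
    intro j hj
    have hj' := Finset.mem_filter.mp hj
    obtain ⟨hB, hrL, hLd, hmax⟩ := hL j
    obtain ⟨hB1, hB2, hB3⟩ := binlam_bounds hT1 hB
    have hsub1 : l ≤ Ll j ∧ Ll j ≤ rr := by
      have := hj'.2 (Finset.mem_Icc.mpr ⟨le_refl _, hB2⟩)
      exact Finset.mem_Icc.mp this
    have hsub2 : l ≤ Lr j ∧ Lr j ≤ rr := by
      have := hj'.2 (Finset.mem_Icc.mpr ⟨hB2, le_refl _⟩)
      exact Finset.mem_Icc.mp this
    constructor
    · by_contra hc
      push_neg at hc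
      obtain ⟨u, v, hn, h3, h4, h5⟩ := binlam_claimL hT1 hB (r j) (hr1 j) (by omega)
      rcases hmax u v hn (by omega) (by omega) with h6 | h6 <;> omega
    · by_contra hc
      push_neg at hc
      obtain ⟨u, v, hn, h3, h4, h5, h6⟩ :=
        binlam_claimR hT1 hB (d j) (hdT j) (by omega)
      rcases hmax u v hn (by omega) h5 with h7 | h7 <;> omega
  -- Step 2: capacity bound at each time slot.
  have key : ∀ t : ℤ, ∑ j ∈ F.filter (fun j => t ∈ Tj j), s j ≤ (m : ℝ) := by
    intro t
    have h1 : ∑ j ∈ F.filter (fun j => t ∈ Tj j), s j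
        ≤ ∑ j ∈ O.filter (fun j => t ∈ Tj j), s j := by
      apply Finset.sum_le_sum_of_subset_of_nonneg
      · intro j hj
        simp only [hF, Finset.mem_filter] at hj ⊢
        exact ⟨hj.1.1, hj.2⟩
      · intro j _ _; exact (hs0 j).le
    have h2 : ∑ j ∈ O.filter (fun j => t ∈ Tj j), s j
        = ∑ i : Fin m, ∑ j ∈ (O.filter (fun j => t ∈ Tj j)).filter
            (fun j => hst j t = i), s j :=
      (Finset.sum_fiberwise_of_maps_to (fun j _ => Finset.mem_univ (hst j t)) s).symm
    have h3 : ∑ i : Fin m, ∑ j ∈ (O.filter (fun j => t ∈ Tj j)).filter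
        (fun j => hst j t = i), s j ≤ ∑ _i : Fin m, (1 : ℝ) := by
      apply Finset.sum_le_sum
      intro i _
      rw [Finset.filter_filter]
      exact hcap i t
    have h4 : ∑ _i : Fin m, (1 : ℝ) = (m : ℝ) := by simp
    linarith [h1, h2 ▸ h1, h3]
  -- Step 3: all scheduled slots of jobs in `F` lie in the interval `I`.
  set I : Finset ℤ := Finset.Icc (l - 2 * w) (rr + w) with hI
  have hIcc : ∀ j ∈ F, Tj j ⊆ I := by
    intro j hj
    have hjO : j ∈ O := (Finset.mem_filter.mp hj).1
    exact subset_trans (hTw j hjO).1 (Finset.Icc_subset_Icc (hwb j hj).1 (hwb j hj).2)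
  -- Step 4: rewrite the area sum as a sum over slots.
  have e1 : ∀ j ∈ F, (p j : ℝ) * s j = ∑ t ∈ I, (if t ∈ Tj j then s j else 0) := by
    intro j hj
    have hjO : j ∈ O := (Finset.mem_filter.mp hj).1
    rw [Finset.sum_ite_mem, Finset.inter_eq_right.mpr (hIcc j hj),
      Finset.sum_const, (hTw j hjO).2, nsmul_eq_mul]
  rw [Finset.sum_congr rfl e1, Finset.sum_comm]
  have e2 : ∀ t ∈ I, ∑ j ∈ F, (if t ∈ Tj j then s j else 0) ≤ (m : ℝ) := by
    intro t _
    rw [← Finset.sum_filter]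
    exact key t
  calc ∑ t ∈ I, ∑ j ∈ F, (if t ∈ Tj j then s j else 0)
      ≤ ∑ _t ∈ I, (m : ℝ) := Finset.sum_le_sum e2
    _ = (I.card : ℝ) * m := by rw [Finset.sum_const, nsmul_eq_mul]
    _ = 4 * m * ((w : ℤ) : ℝ) := by
        have hcard : I.card = (4 * w).toNat := by
          rw [hI, Int.card_Icc]
          congr 1
          omega
        rw [hcard]
        have h4w : ((4 * w).toNat : ℤ) = 4 * w := Int.toNat_of_nonneg (by omega)
        have : (((4 * w).toNat : ℤ) : ℝ) = ((4 * w : ℤ) : ℝ) := by rw [h4w]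
        push_cast at this ⊢
        rw [this]
        ring
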